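/- Let (E, ℰ) be a measurable space, let A_1, …, A_n ∈ ℰ be pairwise disjoint, let ν_1, …, ν_n be probability measures on E with ν_M(A_M) = 1 for each M, let c_1, …, c_n > 0 with Σ_M c_M = 1, and set π = Σ_M c_M ν_M. If ρ is a probability measure with ρ ≪ ν_{M₀} and ρ(A_{M₀}) = 1 for some M₀, then KL(ρ, π) = KL(ρ, ν_{M₀}) + log(1/c_{M₀}). -/

import Mathlib

open MeasureTheory Real ENNReal Classical

/-- Kullback–Leibler divergence with values in `EReal`: `∫ log (dρ/dπ) dρ` when `ρ ≪ π`
(and the integral is well defined), and `+∞` otherwise. -/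
noncomputable def KLdiv {E : Type*} [MeasurableSpace E] (ρ pr : Measure E) : EReal :=
  if ρ ≪ pr ∧ Integrable (fun e => Real.log ((ρ.rnDeriv pr e).toReal)) ρ then
    ((∫ e, Real.log ((ρ.rnDeriv pr e).toReal) ∂ρ : ℝ) : EReal)
  else ⊤

/-- **KL divergence with respect to a finite mixture.**
If `A 1, …, A n` are pairwise disjoint, `ν M (A M) = 1`, `c M > 0` sum to `1`,
`π = ∑ c M • ν M`, and `ρ ≪ ν M₀` with `ρ (A M₀) = 1`, then
`KL(ρ, π) = KL(ρ, ν M₀) + log (1 / c M₀)`. -/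
theorem kl_mixture
    {E : Type*} [MeasurableSpace E] (n : ℕ)
    (A : Fin n → Set E) (hAmeas : ∀ M, MeasurableSet (A M))
    (hdisj : Pairwise (Function.onFun Disjoint A))
    (ν : Fin n → Measure E) (hprob : ∀ M, IsProbabilityMeasure (ν M))
    (hν : ∀ M, ν M (A M) = 1)
    (c : Fin n → ℝ) (hc : ∀ M, 0 < c M) (hcsum : ∑ M, c M = 1)
    (pr : Measure E) (hpr : pr = ∑ M, (ENNReal.ofReal (c M)) • ν M)
    (ρ : Measure E) (hρprob : IsProbabilityMeasure ρ)
    (M₀ : Fin n) (hac : ρ ≪ ν M₀) (hρA : ρ (A M₀) = 1) :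
    KLdiv ρ pr = KLdiv ρ (ν M₀) + ((Real.log (1 / c M₀) : ℝ) : EReal) := by
  classical
  set c₀ : ℝ≥0∞ := ENNReal.ofReal (c M₀) with hc₀def
  have hc₀pos : c₀ ≠ 0 := by
    simp [hc₀def, ENNReal.ofReal_eq_zero, not_le, hc M₀]
  have hc₀top : c₀ ≠ ∞ := ENNReal.ofReal_ne_top
  -- ν M vanishes on A M₀ for M ≠ M₀
  have hν0 : ∀ M, M ≠ M₀ → ν M (A M₀) = 0 := by
    intro M hM
    have hcompl : ν M (A M)ᶜ = 0 := by
      have := measure_compl (μ := ν M) (hAmeas M) (by simp)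
      rw [hν M] at this
      simpa [measure_univ] using this
    exact measure_mono_null (Set.subset_compl_iff_disjoint_left.mpr (hdisj hM)) hcompl
  -- pr applied to sets
  have hprapp : ∀ s : Set E, pr s = ∑ M, ENNReal.ofReal (c M) * ν M s := by
    intro s
    rw [hpr]
    simp [Measure.finset_sum_apply, Measure.smul_apply, smul_eq_mul]
  -- pr is a probability measure
  have hprfin : IsProbabilityMeasure pr := by
    constructor
    rw [hprapp _]
    simp only [measure_univ, mul_one]
    rw [← ENNReal.ofReal_sum_of_nonneg (fun M _ => (hc M).le), hcsum, ENNReal.ofReal_one]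
  -- ρ ≪ pr
  have hacpr : ρ ≪ pr := by
    intro s hs
    have hterm : c₀ * ν M₀ s = 0 := by
      rw [hprapp s] at hs
      exact Finset.sum_eq_zero_iff.mp hs M₀ (Finset.mem_univ _)
    have hν0s : ν M₀ s = 0 := by
      rcases mul_eq_zero.mp hterm with h | h
      · exact absurd h hc₀pos
      · exact h
    exact hac hν0s
  -- ρ (A M₀)ᶜ = 0
  have hρcompl : ρ (A M₀)ᶜ = 0 := by
    have := measure_compl (μ := ρ) (hAmeas M₀) (by simp)
    rw [hρA] at this
    simpa [measure_univ] using this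
  -- pr restricted to A M₀
  have hprrestrict : pr.restrict (A M₀) = (c₀ • ν M₀).restrict (A M₀) := by
    ext t ht
    rw [Measure.restrict_apply ht, Measure.restrict_apply ht,
      hprapp (t ∩ A M₀)]
    rw [Finset.sum_eq_single M₀]
    · simp [Measure.smul_apply, smul_eq_mul, hc₀def]
    · intro M _ hM
      have : ν M (t ∩ A M₀) = 0 :=
        measure_mono_null Set.inter_subset_right (hν0 M hM)
      simp [this]
    · simp
  -- the density of ρ w.r.t. pr
  set f : E → ℝ≥0∞ := (A M₀).indicator (fun x => c₀⁻¹ * ρ.rnDeriv (ν M₀) x) with hfdef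
  have hfmeas : Measurable f :=
    ((Measure.measurable_rnDeriv ρ (ν M₀)).const_mul c₀⁻¹).indicator (hAmeas M₀)
  have hρeq : ρ = pr.withDensity f := by
    ext s hs
    have hres : pr.restrict (A M₀ ∩ s) = (c₀ • ν M₀).restrict (A M₀ ∩ s) := by
      rw [Set.inter_comm, ← Measure.restrict_restrict hs, hprrestrict,
        Measure.restrict_restrict hs, Set.inter_comm]
    rw [withDensity_apply _ hs, hfdef, lintegral_indicator (hAmeas M₀) _,
      Measure.restrict_restrict (hAmeas M₀), hres, Measure.restrict_smul,
      lintegral_smul_measure,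
      lintegral_const_mul _ (Measure.measurable_rnDeriv ρ (ν M₀)),
      smul_eq_mul, ← mul_assoc, ENNReal.mul_inv_cancel hc₀pos hc₀top, one_mul,
      Measure.setLIntegral_rnDeriv hac, Set.inter_comm, measure_inter_conull hρcompl]
  -- rnDeriv relation
  have hrnpr : ρ.rnDeriv pr =ᵐ[pr] f := by
    rw [hρeq]
    exact Measure.rnDeriv_withDensity pr hfmeas
  have hfρ : ρ.rnDeriv pr =ᵐ[ρ] f := hacpr.ae_le hrnpr
  have hmem : ∀ᵐ x ∂ρ, x ∈ A M₀ := by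
    rw [MeasureTheory.ae_iff]
    exact hρcompl
  have hpos : ∀ᵐ x ∂ρ, 0 < ρ.rnDeriv (ν M₀) x := Measure.rnDeriv_pos hac
  have hlt : ∀ᵐ x ∂ρ, ρ.rnDeriv (ν M₀) x < ∞ := hac.ae_le (Measure.rnDeriv_lt_top ρ (ν M₀))
  have hcne : (1 : ℝ) / c M₀ ≠ 0 := one_div_ne_zero (hc M₀).ne'
  -- the log relation
  have hlog : (fun e => Real.log ((ρ.rnDeriv pr e).toReal))
      =ᵐ[ρ] fun e => Real.log ((ρ.rnDeriv (ν M₀) e).toReal) + Real.log (1 / c M₀) := by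
    filter_upwards [hfρ, hmem, hpos, hlt] with x hfx hxA hxpos hxlt
    rw [hfx, hfdef]
    simp only [Set.indicator_of_mem hxA]
    have h1 : (c₀⁻¹).toReal = 1 / c M₀ := by
      rw [ENNReal.toReal_inv, hc₀def, ENNReal.toReal_ofReal (hc M₀).le, one_div]
    have hne : (ρ.rnDeriv (ν M₀) x).toReal ≠ 0 :=
      ENNReal.toReal_ne_zero.mpr ⟨hxpos.ne', hxlt.ne⟩
    rw [ENNReal.toReal_mul, h1, Real.log_mul hcne hne, add_comm]
  by_cases hint : Integrable (fun e => Real.log ((ρ.rnDeriv (ν M₀) e).toReal)) ρ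
  · have hint2 : Integrable (fun e => Real.log ((ρ.rnDeriv pr e).toReal)) ρ :=
      (hint.add (integrable_const _)).congr hlog.symm
    rw [KLdiv, KLdiv, if_pos ⟨hacpr, hint2⟩, if_pos ⟨hac, hint⟩,
      integral_congr_ae hlog, integral_add hint (integrable_const _), integral_const]
    simp [measure_univ]
  · have hint2 : ¬ Integrable (fun e => Real.log ((ρ.rnDeriv pr e).toReal)) ρ := by
      intro h
      have h2 := (h.congr hlog).sub (integrable_const (Real.log (1 / c M₀)))
      exact hint (h2.congr (by filter_upwards with x; simp [Pi.sub_apply]))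
    rw [KLdiv, KLdiv, if_neg (fun h => hint2 h.2), if_neg (fun h => hint h.2),
      EReal.top_add_coe]
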